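/- Inductive step of the main construction: suppose x₀ < ⋯ < x_m < N_m and ξ_m : N_m ∖ {x₀,…,x_m} → 2 are such that T^{N_m}(ξ_m) is a binary tree and any two maximal elements s, t of W^{N_m}(ξ_m) with s ∼ t satisfy s ≡ t. Then there exist N_{m+1} > N_m and ξ_{m+1} : N_{m+1} ∖ {x₀,…,x_m, N_m} → 2 extending ξ_m such that T^{N_{m+1}}(ξ_{m+1}) is a binary tree and any two maximal elements s, t of W^{N_{m+1}}(ξ_{m+1}) with s ∼ t satisfy s ≡ t. -/

import Mathlib

/-- `P` is the map `Ψ*` defined by recursion from `Ψ`: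
`Ψ*(⟨⟩) = ⟨⟩` and `Ψ*(t⌢⟨i⟩) = Ψ*(t)⌢⟨Ψ(t⌢⟨i⟩)⟩`. -/
def IsPsiStar (Ψ : List Bool → ℕ) (P : List Bool → List ℕ) : Prop :=
  P [] = [] ∧ ∀ (t : List Bool) (i : Bool), P (t ++ [i]) = P t ++ [Ψ (t ++ [i])]

/-- `s ≡ t` : `Ψ(s⌢θ) = Ψ(t⌢θ)` for all finite binary sequences `θ`. -/
def Eqv (Ψ : List Bool → ℕ) (s t : List Bool) : Prop :=
  ∀ θ : List Bool, Ψ (s ++ θ) = Ψ (t ++ θ)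

/-- `t` is compatible with the partial function `ξ : ω ⇀ 2`. -/
def Compat (ξ : ℕ → Option Bool) (t : List Bool) : Prop :=
  ∀ k < t.length, ∀ b, ξ k = some b → t[k]? = some b

/-- `W^ℓ(ξ)` for finite `ℓ`: compatible sequences of length `≤ ℓ`. -/
def Wfin (ξ : ℕ → Option Bool) (ℓ : ℕ) : Set (List Bool) :=
  {t | t.length ≤ ℓ ∧ Compat ξ t}

/-- `W(ξ) = W^ω(ξ)`: all sequences compatible with `ξ`. -/
def Wall (ξ : ℕ → Option Bool) : Set (List Bool) :=
  {t | Compat ξ t}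

/-- the set of minimal proper extensions of `η` in `T`. -/
def succT (T : Set (List ℕ)) (η : List ℕ) : Set (List ℕ) :=
  {ν | ν ∈ T ∧ η <+: ν ∧ η ≠ ν ∧ ∀ ρ ∈ T, η <+: ρ → ρ <+: ν → ρ = η ∨ ρ = ν}

/-- a tree is binary if every node has at most 2 immediate successors. -/
def IsBinary (T : Set (List ℕ)) : Prop :=
  ∀ η ∈ T, (succT T η).Finite ∧ (succT T η).ncard ≤ 2

/-!
Choose θ so that every pair `s, t` of sequences of length `N_m + 1` is resolved by θ: either
`s⌢θ ≡ t⌢θ`, or `Ψ(s⌢χ) ≠ Ψ(t⌢χ)` for some initial segment `χ` of θ. Such θ exists because a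
resolved pair stays resolved when θ is extended. Let `ξ_{m+1}` agree with `ξ_m` below `N_m`,
leave `N_m` free and copy θ after it. Below level `N_m` the new tree is the old one. Above it, a
node of `W^{N_{m+1}}(ξ_{m+1})` consists of its restriction `u` to `N_m`, the free bit and a forced
segment of θ; as `u` is determined up to `≡` by `Ψ*(u)`, every node has at most two successors.
At the top level, `s ∼ t` makes `Ψ` agree on all `s⌢χ, t⌢χ`, so θ can resolve the pair only by
`s ≡ t`.
-/

namespace IsPsiStar

variable {Ψ : List Bool → ℕ} {P : List Bool → List ℕ}

theorem length_eq (hP : IsPsiStar Ψ P) (u : List Bool) : (P u).length = u.length := by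
  induction u using List.reverseRecOn with
  | nil => simp [hP.1]
  | append_singleton u i ih => simp [hP.2, ih]

theorem prefix_append (hP : IsPsiStar Ψ P) (u w : List Bool) : P u <+: P (u ++ w) := by
  induction w using List.reverseRecOn with
  | nil => simp
  | append_singleton w i ih =>
    rw [← List.append_assoc, hP.2]
    exact ih.trans (List.prefix_append _ _)

theorem take_eq (hP : IsPsiStar Ψ P) (u : List Bool) (k : ℕ) :
    P (u.take k) = (P u).take k := by
  have h : P (u.take k) <+: P u := by
    simpa using hP.prefix_append (u.take k) (u.drop k)
  rw [List.prefix_iff_eq_take.mp h, hP.length_eq, List.length_take, List.take_eq_take_iff,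
    hP.length_eq]
  omega

theorem eq_append_of_prefix (hP : IsPsiStar Ψ P) {η : List ℕ} {w : List Bool}
    (hη : η <+: P w) (hw : w.length = η.length + 1) : P w = η ++ [Ψ w] := by
  obtain ⟨u, i, rfl⟩ := (List.eq_nil_or_concat w).resolve_left (by rintro rfl; simp at hw)
  rw [List.concat_eq_append, hP.2] at hη ⊢
  rw [List.prefix_iff_eq_take.mp hη, List.take_left' (by simp [hP.length_eq] at hw ⊢; omega)]

theorem getLast?_eq (hP : IsPsiStar Ψ P) {w : List Bool} (hw : w ≠ []) :
    (P w).getLast? = some (Ψ w) := by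
  obtain ⟨u, i, rfl⟩ := (List.eq_nil_or_concat w).resolve_left hw
  rw [List.concat_eq_append, hP.2, List.getLast?_concat]

theorem apply_eq_of_apply_append_eq (hP : IsPsiStar Ψ P) {a b c d : List Bool}
    (h : P (a ++ b) = P (c ++ d)) (hac : a.length = c.length) (ha : a ≠ []) : Ψ a = Ψ c := by
  have hPac : P a = P c := by
    have h' := congrArg (List.take a.length) h
    rwa [← hP.take_eq, ← hP.take_eq, List.take_left' rfl, List.take_left' hac.symm] at h'
  have hc : c ≠ [] := by rintro rfl; simp_all
  simpa [hP.getLast?_eq ha, hP.getLast?_eq hc] using congrArg List.getLast? hPac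

end IsPsiStar

theorem Compat.of_prefix {ξ : ℕ → Option Bool} {u v : List Bool} (h : Compat ξ v)
    (huv : u <+: v) : Compat ξ u := by
  obtain ⟨w, rfl⟩ := huv
  intro k hk b hb
  simpa [List.getElem?_append_left hk] using h k (by simp; omega) b hb

theorem compat_congr {ξ ξ' : ℕ → Option Bool} {u : List Bool}
    (h : ∀ k < u.length, ξ k = ξ' k) : Compat ξ u ↔ Compat ξ' u :=
  forall₂_congr fun k hk => by rw [h k hk]

theorem mem_Wfin_of_prefix {ξ : ℕ → Option Bool} {ℓ : ℕ} ⦃u v : List Bool⦄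
    (huv : u <+: v) (hv : v ∈ Wfin ξ ℓ) : u ∈ Wfin ξ ℓ :=
  ⟨huv.length_le.trans hv.1, hv.2.of_prefix huv⟩

/-- Maximal elements `s ∼ t` of `W^ℓ(ξ)` satisfy `s ≡ t`. -/
def MaximalSimEqv (Ψ : List Bool → ℕ) (P : List Bool → List ℕ) (ξ : ℕ → Option Bool)
    (ℓ : ℕ) : Prop :=
  ∀ s t : List Bool, s.length = ℓ → t.length = ℓ → Compat ξ s → Compat ξ t → P s = P t →
    Eqv Ψ s t

theorem succT_subset_succT {T T' : Set (List ℕ)} {η : List ℕ} (hT : T ⊆ T')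
    (h : succT T' η ⊆ T) : succT T' η ⊆ succT T η :=
  fun _ hν => ⟨h hν, hν.2.1, hν.2.2.1, fun ρ hρ => hν.2.2.2 ρ (hT hρ)⟩

theorem finite_and_ncard_le_two_of_subset_range {α : Type*} {s : Set α} (f : Bool → α)
    (h : s ⊆ Set.range f) : s.Finite ∧ s.ncard ≤ 2 := by
  have hf : (Set.range f).Finite := Set.finite_range f
  refine ⟨hf.subset h, (Set.ncard_le_ncard h hf).trans ?_⟩
  rw [← Set.image_univ]
  exact (Set.ncard_image_le Set.finite_univ).trans_eq (by simp)

theorem exists_of_mem_succT_image {Ψ : List Bool → ℕ} {P : List Bool → List ℕ}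
    (hP : IsPsiStar Ψ P) {S : Set (List Bool)} (hS : ∀ ⦃u v⦄, u <+: v → v ∈ S → u ∈ S)
    {η ν : List ℕ} (hν : ν ∈ succT (P '' S) η) :
    ∃ w ∈ S, w.length = η.length + 1 ∧ P w = ν := by
  obtain ⟨⟨u, hu, rfl⟩, hηu, hne, hmin⟩ := hν
  have hlt : η.length < u.length := by
    rw [← hP.length_eq u]
    exact lt_of_le_of_ne hηu.length_le fun h => hne (hηu.eq_of_length h)
  set w := u.take (η.length + 1)
  have hw : w.length = η.length + 1 := by simp [w]; omega
  have hPw : P w = (P u).take (η.length + 1) := hP.take_eq u _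
  have hηw : η <+: P w := by
    rw [hPw]
    exact List.prefix_take_iff.mpr ⟨hηu, by omega⟩
  refine ⟨w, hS (List.take_prefix _ _) hu, hw, ?_⟩
  rcases hmin (P w) ⟨w, hS (List.take_prefix _ _) hu, rfl⟩ hηw
    (hPw ▸ List.take_prefix _ _) with h | h
  · have := hP.length_eq w
    rw [h] at this
    omega
  · exact h

/-- In the second case no extension of `s⌢θ` is `∼` to an extension of `t⌢θ`. -/
def Resolves (Ψ : List Bool → ℕ) (θ s t : List Bool) : Prop :=
  Eqv Ψ (s ++ θ) (t ++ θ) ∨ ∃ χ, χ <+: θ ∧ Ψ (s ++ χ) ≠ Ψ (t ++ χ)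

section Resolves

variable {Ψ : List Bool → ℕ}

theorem Resolves.append {θ s t : List Bool} (h : Resolves Ψ θ s t) (ρ : List Bool) :
    Resolves Ψ (θ ++ ρ) s t := by
  rcases h with h | ⟨χ, hχ, hne⟩
  · exact Or.inl fun δ => by simpa using h (ρ ++ δ)
  · exact Or.inr ⟨χ, hχ.trans (List.prefix_append _ _), hne⟩

theorem exists_resolves_append (Ψ : List Bool → ℕ) (θ s t : List Bool) :
    ∃ ρ, Resolves Ψ (θ ++ ρ) s t := by
  by_cases h : Eqv Ψ (s ++ θ) (t ++ θ)
  · exact ⟨[], Or.inl (by simpa using h)⟩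
  · obtain ⟨δ, hδ⟩ := not_forall.mp h
    exact ⟨δ, Or.inr ⟨θ ++ δ, List.prefix_rfl, by simpa using hδ⟩⟩

theorem exists_resolves_of_finite (Ψ : List Bool → ℕ) {F : Set (List Bool × List Bool)}
    (hF : F.Finite) : ∃ θ, ∀ p ∈ F, Resolves Ψ θ p.1 p.2 := by
  induction F, hF using Set.Finite.induction_on with
  | empty => exact ⟨[], by simp⟩
  | @insert p F _ _ ih =>
    obtain ⟨θ, hθ⟩ := ih
    obtain ⟨ρ, hρ⟩ := exists_resolves_append Ψ θ p.1 p.2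
    exact ⟨θ ++ ρ, by rintro q (rfl | hq); exacts [hρ, (hθ q hq).append ρ]⟩

end Resolves

/-- The `ξ_{m+1}` of the construction, for `n = N_m`. -/
def extendPast (ξ : ℕ → Option Bool) (n : ℕ) (θ : List Bool) (k : ℕ) : Option Bool :=
  if k < n then ξ k else if k = n then none else θ[k - (n + 1)]?

section extendPast

variable {Ψ : List Bool → ℕ} {P : List Bool → List ℕ} {ξ : ℕ → Option Bool} {n : ℕ}
  {θ : List Bool}

theorem extendPast_of_lt {k : ℕ} (hk : k < n) : extendPast ξ n θ k = ξ k := if_pos hk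

theorem extendPast_ne_none_iff (k : ℕ) :
    extendPast ξ n θ k ≠ none ↔ k < n ∧ ξ k ≠ none ∨ n < k ∧ k < n + 1 + θ.length := by
  unfold extendPast
  split_ifs with h₁ h₂
  · simp [h₁, show ¬ n < k by omega]
  · simp [h₂]
  · rw [Ne, List.getElem?_eq_none_iff]
    omega

theorem mem_Wfin_extendPast_iff {u : List Bool} (hu : u.length ≤ n) :
    u ∈ Wfin (extendPast ξ n θ) (n + 1 + θ.length) ↔ u ∈ Wfin ξ n := by
  show u.length ≤ _ ∧ Compat _ u ↔ u.length ≤ n ∧ Compat ξ u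
  rw [compat_congr fun k hk => extendPast_of_lt (θ := θ) (ξ := ξ) (by omega)]
  exact and_congr_left fun _ => by omega

theorem Compat.drop_prefix_of_extendPast {u : List Bool} (hu : Compat (extendPast ξ n θ) u)
    (hlen : u.length ≤ n + 1 + θ.length) : u.drop (n + 1) <+: θ := by
  refine List.prefix_iff_getElem?.mpr fun j hj => ?_
  have hjθ : j < θ.length := by simp at hj; omega
  have hval : extendPast ξ n θ (n + 1 + j) = some θ[j] := by
    simp [extendPast, show ¬ n + 1 + j < n by omega, show n + 1 + j ≠ n by omega, hjθ]
  have h := hu (n + 1 + j) (by simp at hj; omega) _ hval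
  rw [List.getElem?_eq_getElem (by simp at hj; omega)] at h
  simpa [List.getElem?_eq_getElem hjθ] using (Option.some.inj h).symm

theorem succT_extendPast_subset {η : List ℕ} (hP : IsPsiStar Ψ P) (hη : η.length < n) :
    succT (P '' Wfin (extendPast ξ n θ) (n + 1 + θ.length)) η ⊆ succT (P '' Wfin ξ n) η := by
  refine succT_subset_succT ?_ fun ν hν => ?_
  · rintro _ ⟨u, hu, rfl⟩
    exact ⟨u, (mem_Wfin_extendPast_iff hu.1).mpr hu, rfl⟩
  · obtain ⟨w, hw, hwlen, rfl⟩ := exists_of_mem_succT_image hP mem_Wfin_of_prefix hν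
    exact ⟨w, (mem_Wfin_extendPast_iff (by omega)).mp hw, rfl⟩

theorem succT_extendPast_subset_range (hP : IsPsiStar Ψ P) (hmax : MaximalSimEqv Ψ P ξ n)
    {u : List Bool} (hu : u ∈ Wfin (extendPast ξ n θ) (n + 1 + θ.length)) (hn : n ≤ u.length) :
    succT (P '' Wfin (extendPast ξ n θ) (n + 1 + θ.length)) (P u) ⊆
      Set.range fun b : Bool => P u ++ [Ψ (u.take n ++ b :: θ.take (u.length - n))] := by
  intro ν hν
  obtain ⟨w, ⟨hwlen, hwc⟩, hw, rfl⟩ :=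
    exists_of_mem_succT_image hP mem_Wfin_of_prefix hν
  rw [hP.length_eq] at hw
  have hnw : n < w.length := by omega
  have hsim : P (w.take n) = P (u.take n) := by
    rw [hP.take_eq, hP.take_eq, List.prefix_iff_eq_take.mp hν.2.1, List.take_take,
      hP.length_eq, min_eq_left hn]
  have hcompat : ∀ v ∈ Wfin (extendPast ξ n θ) (n + 1 + θ.length), Compat ξ (v.take n) :=
    fun v hv => ((mem_Wfin_extendPast_iff (by simp)).mp
      (mem_Wfin_of_prefix (List.take_prefix n v) hv)).2
  have heqv : Eqv Ψ (w.take n) (u.take n) :=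
    hmax _ _ (by simp; omega) (by simp; omega) (hcompat w ⟨hwlen, hwc⟩) (hcompat u hu) hsim
  have hdrop : w.drop (n + 1) = θ.take (u.length - n) := by
    rw [List.prefix_iff_eq_take.mp (hwc.drop_prefix_of_extendPast hwlen)]
    simp only [List.length_drop]
    congr 1
    omega
  refine ⟨w[n], ?_⟩
  calc P u ++ [Ψ (u.take n ++ w[n] :: θ.take (u.length - n))]
      = P u ++ [Ψ (w.take n ++ w[n] :: w.drop (n + 1))] := by rw [heqv, hdrop]
    _ = P w := by
      rw [← List.drop_eq_getElem_cons hnw, List.take_append_drop,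
        ← hP.eq_append_of_prefix hν.2.1 (by rw [hP.length_eq]; omega)]

theorem isBinary_extendPast (hP : IsPsiStar Ψ P) (hbin : IsBinary (P '' Wfin ξ n))
    (hmax : MaximalSimEqv Ψ P ξ n) :
    IsBinary (P '' Wfin (extendPast ξ n θ) (n + 1 + θ.length)) := by
  rintro _ ⟨u, hu, rfl⟩
  rcases lt_or_ge u.length n with hn | hn
  · have hsub := succT_extendPast_subset hP (θ := θ) (ξ := ξ) (by rwa [hP.length_eq])
    obtain ⟨hfin, hcard⟩ := hbin _ ⟨u, (mem_Wfin_extendPast_iff hn.le).mp hu, rfl⟩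
    exact ⟨hfin.subset hsub, (Set.ncard_le_ncard hsub hfin).trans hcard⟩
  · exact finite_and_ncard_le_two_of_subset_range _
      (succT_extendPast_subset_range hP hmax hu hn)

theorem maximalSimEqv_extendPast (hP : IsPsiStar Ψ P)
    (hθ : ∀ s t : List Bool, s.length = n + 1 → t.length = n + 1 → Resolves Ψ θ s t) :
    MaximalSimEqv Ψ P (extendPast ξ n θ) (n + 1 + θ.length) := by
  have hsplit : ∀ u : List Bool, u.length = n + 1 + θ.length → Compat (extendPast ξ n θ) u →
      u = u.take (n + 1) ++ θ := fun u hlen hu => by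
    conv_lhs => rw [← List.take_append_drop (n + 1) u]
    rw [(hu.drop_prefix_of_extendPast hlen.le).eq_of_length (by simp; omega)]
  intro s t hs ht hcs hct hst
  rw [hsplit s hs hcs, hsplit t ht hct] at hst ⊢
  rcases hθ (s.take (n + 1)) (t.take (n + 1)) (by simp; omega) (by simp; omega)
    with h | ⟨χ, ⟨ρ, rfl⟩, hne⟩
  · exact h
  · refine absurd (hP.apply_eq_of_apply_append_eq (b := ρ) (d := ρ) ?_ ?_ ?_) hne
    · simpa using hst
    · simp; omega
    · exact List.ne_nil_of_length_pos (by simp [hs])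

end extendPast

theorem inductive_step (Ψ : List Bool → ℕ) (P : List Bool → List ℕ)
    (hP : IsPsiStar Ψ P) (m Nm : ℕ) (x : Fin (m + 1) → ℕ)
    (hx : StrictMono x) (hxN : x (Fin.last m) < Nm)
    (ξm : ℕ → Option Bool)
    (hdom : ∀ k, ξm k ≠ none ↔ k < Nm ∧ k ∉ Set.range x)
    (hbin : IsBinary (P '' Wfin ξm Nm))
    (hmax : ∀ s t : List Bool, s.length = Nm → t.length = Nm →
      Compat ξm s → Compat ξm t → P s = P t → Eqv Ψ s t) :
    ∃ N' > Nm, ∃ ξ' : ℕ → Option Bool,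
      (∀ k b, ξm k = some b → ξ' k = some b) ∧
      (∀ k, ξ' k ≠ none ↔ k < N' ∧ k ∉ Set.range x ∧ k ≠ Nm) ∧
      IsBinary (P '' Wfin ξ' N') ∧
      (∀ s t : List Bool, s.length = N' → t.length = N' →
        Compat ξ' s → Compat ξ' t → P s = P t → Eqv Ψ s t) := by
  obtain ⟨θ, hθ⟩ := exists_resolves_of_finite Ψ
    ((List.finite_length_eq Bool (Nm + 1)).prod (List.finite_length_eq Bool (Nm + 1)))
  have hxlt : ∀ i, x i < Nm := fun i => (hx.monotone (Fin.le_last i)).trans_lt hxN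
  refine ⟨Nm + 1 + θ.length, by omega, extendPast ξm Nm θ, fun k b hb => ?_, fun k => ?_,
    isBinary_extendPast hP hbin hmax,
    maximalSimEqv_extendPast hP fun s t hs ht => hθ (s, t) ⟨hs, ht⟩⟩
  · rwa [extendPast_of_lt ((hdom k).mp (by simp [hb])).1]
  · rw [extendPast_ne_none_iff, hdom]
    constructor
    · rintro (⟨hk, -, hkx⟩ | ⟨hk, hk'⟩)
      · exact ⟨by omega, hkx, hk.ne⟩
      · exact ⟨hk', fun ⟨i, hi⟩ => by have := hxlt i; omega, hk.ne'⟩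
    · rintro ⟨hk', hkx, hkn⟩
      rcases Nat.lt_or_gt_of_ne hkn with hk | hk
      exacts [Or.inl ⟨hk, hk, hkx⟩, Or.inr ⟨hk, hk'⟩]
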